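/- arXiv:1908.10500 — 2 statements merged into one kernel-verified Lean document; each statement's English description precedes it below -/
import Mathlib

section
/- Let a_1 ≥ a_2 ≥ ... ≥ a_n ≥ 0 and b_1 ≥ b_2 ≥ ... ≥ b_n ≥ 0 be real numbers such that ∏_{i=1}^{m} a_i ≥ ∏_{i=1}^{m} b_i for every m with 1 ≤ m ≤ n. Then for every constant c ≥ 0 and every m with 1 ≤ m ≤ n, ∏_{i=1}^{m} (1 + c·a_i) ≥ ∏_{i=1}^{m} (1 + c·b_i). -/
open Finset

/-- Abel summation: if `t` is nonnegative and antitone on `range m` and all prefix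
sums of `d` up to `m` are nonnegative, then `∑ i < m, t i * d i ≥ 0`. -/
lemma abel_nonneg : ∀ (m : ℕ) (t d : ℕ → ℝ),
    (∀ i j, i ≤ j → j < m → t j ≤ t i) → (∀ i, i < m → 0 ≤ t i) →
    (∀ k, k ≤ m → 0 ≤ ∑ i ∈ range k, d i) →
    0 ≤ ∑ i ∈ range m, t i * d i := by
  intro m
  induction m with
  | zero => simp
  | succ m ih =>
    intro t d hmono hnn hsum
    have key : ∑ i ∈ range (m+1), t i * d i
        = ∑ i ∈ range m, (t i - t m) * d i
          + t m * ∑ i ∈ range (m+1), d i := by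
      have h : ∑ i ∈ range m, (t i - t m) * d i
          = ∑ i ∈ range m, t i * d i - t m * ∑ i ∈ range m, d i := by
        rw [Finset.mul_sum, ← Finset.sum_sub_distrib]
        exact Finset.sum_congr rfl fun i _ => by ring
      rw [Finset.sum_range_succ, Finset.sum_range_succ d, h]
      ring
    rw [key]
    have h1 : 0 ≤ ∑ i ∈ range m, (t i - t m) * d i := by
      apply ih
      · intro i j hij hj
        have := hmono i j hij (hj.trans (Nat.lt_succ_self m))
        linarith
      · intro i hi
        have := hmono i m (Nat.le_of_lt hi) (Nat.lt_succ_self m)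
        linarith
      · intro k hk
        exact hsum k (hk.trans (Nat.le_succ m))
    have h2 : 0 ≤ t m * ∑ i ∈ range (m+1), d i :=
      mul_nonneg (hnn m (Nat.lt_succ_self m)) (hsum (m+1) le_rfl)
    linarith

/-- Pointwise key inequality via weighted AM–GM. -/
lemma key_ineq {c u v : ℝ} (hc : 0 ≤ c) (hu : 0 < u) (hv : 0 < v) :
    Real.log (1 + c*v) + c*v/(1 + c*v) * (Real.log u - Real.log v)
      ≤ Real.log (1 + c*u) := by
  have hs : 0 ≤ c * v := mul_nonneg hc hv.le
  have hs1 : (0:ℝ) < 1 + c * v := by linarith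
  have hr : 0 < u / v := div_pos hu hv
  have hw : 1/(1 + c*v) + (c*v)/(1 + c*v) = 1 := by field_simp
  have hamgm := Real.geom_mean_le_arith_mean2_weighted
    (w₁ := 1/(1 + c*v)) (w₂ := (c*v)/(1 + c*v)) (p₁ := 1) (p₂ := u/v)
    (by positivity) (by positivity) zero_le_one hr.le hw
  rw [Real.one_rpow, one_mul] at hamgm
  have hval : 1/(1 + c*v) * 1 + (c*v)/(1 + c*v) * (u/v) = (1 + c*u)/(1 + c*v) := by
    field_simp
  rw [hval] at hamgm
  have hrpos : (0:ℝ) < (u/v) ^ ((c*v)/(1 + c*v)) := Real.rpow_pos_of_pos hr _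
  have hA : (1 + c*u) ≠ 0 := by positivity
  have hB : (1 + c*v) ≠ 0 := by positivity
  have hlog := Real.log_le_log hrpos hamgm
  rw [Real.log_rpow hr, Real.log_div hA hB, Real.log_div hu.ne' hv.ne'] at hlog
  linarith

/-- Positive case over `ℕ`. -/
lemma pos_case (a b : ℕ → ℝ) (c : ℝ) (hc : 0 ≤ c) (m : ℕ)
    (hbmono : ∀ i j, i ≤ j → j < m → b j ≤ b i)
    (hbpos : ∀ i, i < m → 0 < b i)
    (hmaj : ∀ k, k ≤ m → ∏ i ∈ range k, b i ≤ ∏ i ∈ range k, a i) :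
    ∏ i ∈ range m, (1 + c * b i) ≤ ∏ i ∈ range m, (1 + c * a i) := by
  -- a is positive on range m
  have hbprod : ∀ k, k ≤ m → 0 < ∏ i ∈ range k, b i := by
    intro k hk
    exact Finset.prod_pos (fun i hi => hbpos i (lt_of_lt_of_le (mem_range.mp hi) hk))
  have haprodpos : ∀ k, k ≤ m → 0 < ∏ i ∈ range k, a i := by
    intro k hk
    exact lt_of_lt_of_le (hbprod k hk) (hmaj k hk)
  have hapos : ∀ i, i < m → 0 < a i := by
    intro i hi
    have h1 : 0 < ∏ j ∈ range i, a j := haprodpos i (Nat.le_of_lt hi)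
    have h2 : 0 < ∏ j ∈ range (i+1), a j := haprodpos (i+1) hi
    rw [Finset.prod_range_succ] at h2
    rcases mul_pos_iff.mp h2 with ⟨_, h⟩ | ⟨h, _⟩
    · exact h
    · linarith
  -- reduce to sum of logs
  have hfacb : ∀ i, i < m → (0:ℝ) < 1 + c * b i := by
    intro i hi; have := hbpos i hi; nlinarith
  have hfaca : ∀ i, i < m → (0:ℝ) < 1 + c * a i := by
    intro i hi; have := hapos i hi; nlinarith
  have hpb : 0 < ∏ i ∈ range m, (1 + c * b i) :=
    Finset.prod_pos (fun i hi => hfacb i (mem_range.mp hi))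
  have hpa : 0 < ∏ i ∈ range m, (1 + c * a i) :=
    Finset.prod_pos (fun i hi => hfaca i (mem_range.mp hi))
  rw [← Real.exp_log hpb, ← Real.exp_log hpa, Real.exp_le_exp,
    Real.log_prod (fun i hi => (hfacb i (mem_range.mp hi)).ne'),
    Real.log_prod (fun i hi => (hfaca i (mem_range.mp hi)).ne')]
  -- Abel argument
  set t : ℕ → ℝ := fun i => c * b i / (1 + c * b i) with ht
  set d : ℕ → ℝ := fun i => Real.log (a i) - Real.log (b i) with hd
  have step : ∀ i ∈ range m,
      Real.log (1 + c * b i) + t i * d i ≤ Real.log (1 + c * a i) := by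
    intro i hi
    exact key_ineq hc (hapos i (mem_range.mp hi)) (hbpos i (mem_range.mp hi))
  have habel : 0 ≤ ∑ i ∈ range m, t i * d i := by
    apply abel_nonneg
    · intro i j hij hj
      have hbj := hbpos j hj
      have hbi := hbpos i (lt_of_le_of_lt hij hj)
      have hle : b j ≤ b i := hbmono i j hij hj
      rw [ht]
      rw [div_le_div_iff₀ (by nlinarith) (by nlinarith)]
      nlinarith
    · intro i hi
      have := hbpos i hi
      have := hfacb i hi
      positivity
    · intro k hk
      have : ∑ i ∈ range k, d i
          = Real.log (∏ i ∈ range k, a i) - Real.log (∏ i ∈ range k, b i) := by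
        rw [Real.log_prod (fun i hi => (hapos i (lt_of_lt_of_le (mem_range.mp hi) hk)).ne'),
          Real.log_prod (fun i hi => (hbpos i (lt_of_lt_of_le (mem_range.mp hi) hk)).ne'),
          Finset.sum_sub_distrib]
      rw [this, sub_nonneg]
      exact Real.log_le_log (hbprod k hk) (hmaj k hk)
  calc ∑ i ∈ range m, Real.log (1 + c * b i)
      ≤ ∑ i ∈ range m, (Real.log (1 + c * b i) + t i * d i) := by
        rw [Finset.sum_add_distrib]; linarith
    _ ≤ ∑ i ∈ range m, Real.log (1 + c * a i) := Finset.sum_le_sum step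

/-- General case over `ℕ`, allowing zeros in `b`. -/
lemma gen_case (a b : ℕ → ℝ) (c : ℝ) (hc : 0 ≤ c) : ∀ m : ℕ,
    (∀ i j, i ≤ j → j < m → b j ≤ b i) →
    (∀ i, i < m → 0 ≤ b i) → (∀ i, i < m → 0 ≤ a i) →
    (∀ k, k ≤ m → ∏ i ∈ range k, b i ≤ ∏ i ∈ range k, a i) →
    ∏ i ∈ range m, (1 + c * b i) ≤ ∏ i ∈ range m, (1 + c * a i) := by
  intro m
  induction m with
  | zero => simp
  | succ m ih =>
    intro hbmono hbnn hann hmaj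
    by_cases hpos : ∀ i, i < m + 1 → 0 < b i
    · exact pos_case a b c hc (m+1) hbmono hpos hmaj
    · push_neg at hpos
      obtain ⟨j, hj, hbj⟩ := hpos
      have hbm : b m = 0 := by
        have h1 : b m ≤ b j := hbmono j m (Nat.lt_succ_iff.mp hj) (Nat.lt_succ_self m)
        have h2 : 0 ≤ b m := hbnn m (Nat.lt_succ_self m)
        have h3 : 0 ≤ b j := hbnn j hj
        linarith
      have ihres : ∏ i ∈ range m, (1 + c * b i) ≤ ∏ i ∈ range m, (1 + c * a i) := by
        apply ih
        · intro i j' hij hj'; exact hbmono i j' hij (hj'.trans (Nat.lt_succ_self m))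
        · intro i hi; exact hbnn i (hi.trans (Nat.lt_succ_self m))
        · intro i hi; exact hann i (hi.trans (Nat.lt_succ_self m))
        · intro k hk; exact hmaj k (hk.trans (Nat.le_succ m))
      rw [Finset.prod_range_succ, Finset.prod_range_succ, hbm, mul_zero, add_zero, mul_one]
      have ham : 0 ≤ a m := hann m (Nat.lt_succ_self m)
      have h1 : (1:ℝ) ≤ 1 + c * a m := by nlinarith
      have hprodnn : 0 ≤ ∏ i ∈ range m, (1 + c * b i) := by
        apply Finset.prod_nonneg
        intro i hi
        have := hbnn i ((mem_range.mp hi).trans (Nat.lt_succ_self m))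
        nlinarith
      have hya : 0 ≤ ∏ i ∈ range m, (1 + c * a i) := le_trans hprodnn ihres
      nlinarith [ihres, hprodnn, h1, hya]

/-- **Weak multiplicative majorization transfers through `t ↦ 1 + c·t`.**
If `a₁ ≥ ... ≥ aₙ ≥ 0` and `b₁ ≥ ... ≥ bₙ ≥ 0` satisfy
`∏_{i<m} a i ≥ ∏_{i<m} b i` for every `1 ≤ m ≤ n`, then for every `c ≥ 0` and
every `1 ≤ m ≤ n`, `∏_{i<m} (1 + c * a i) ≥ ∏_{i<m} (1 + c * b i)`. -/
theorem weak_log_majorization_mono_one_add_mul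
    {n : ℕ} (a b : Fin n → ℝ)
    (ha_mono : Antitone a) (hb_mono : Antitone b)
    (ha_nonneg : ∀ i, 0 ≤ a i) (hb_nonneg : ∀ i, 0 ≤ b i)
    (hmaj : ∀ (m : ℕ) (hm : m ≤ n), 1 ≤ m →
      ∏ i : Fin m, b (Fin.castLE hm i) ≤ ∏ i : Fin m, a (Fin.castLE hm i)) :
    ∀ (c : ℝ), 0 ≤ c → ∀ (m : ℕ) (hm : m ≤ n), 1 ≤ m →
      ∏ i : Fin m, (1 + c * b (Fin.castLE hm i)) ≤
        ∏ i : Fin m, (1 + c * a (Fin.castLE hm i)) := by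
  intro c hc m hm hm1
  set a' : ℕ → ℝ := fun i => if h : i < n then a ⟨i, h⟩ else 0 with ha'
  set b' : ℕ → ℝ := fun i => if h : i < n then b ⟨i, h⟩ else 0 with hb'
  have ha'eq : ∀ (k : ℕ) (hk : k ≤ n) (i : Fin k), a' i.val = a (Fin.castLE hk i) := by
    intro k hk i
    simp only [ha', dif_pos (lt_of_lt_of_le i.isLt hk)]
    rfl
  have hb'eq : ∀ (k : ℕ) (hk : k ≤ n) (i : Fin k), b' i.val = b (Fin.castLE hk i) := by
    intro k hk i
    simp only [hb', dif_pos (lt_of_lt_of_le i.isLt hk)]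
    rfl
  have key := gen_case a' b' c hc m
    (by
      intro i j hij hj
      have hjn : j < n := lt_of_lt_of_le hj hm
      have hin : i < n := lt_of_le_of_lt hij hjn
      simp only [hb', dif_pos hjn, dif_pos hin]
      exact hb_mono (by exact_mod_cast hij))
    (by
      intro i hi
      have hin : i < n := lt_of_lt_of_le hi hm
      simp only [hb', dif_pos hin]
      exact hb_nonneg _)
    (by
      intro i hi
      have hin : i < n := lt_of_lt_of_le hi hm
      simp only [ha', dif_pos hin]
      exact ha_nonneg _)
    (by
      intro k hk
      rcases Nat.eq_zero_or_pos k with hk0 | hk1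
      · simp [hk0]
      · have hkn : k ≤ n := hk.trans hm
        have hb0 := hmaj k hkn hk1
        rw [← Fin.prod_univ_eq_prod_range a' k, ← Fin.prod_univ_eq_prod_range b' k]
        rw [Finset.prod_congr rfl (fun i _ => ha'eq k hkn i),
          Finset.prod_congr rfl (fun i _ => hb'eq k hkn i)]
        exact hb0)
  rw [← Fin.prod_univ_eq_prod_range (fun i => 1 + c * a' i) m,
    ← Fin.prod_univ_eq_prod_range (fun i => 1 + c * b' i) m] at key
  calc ∏ i : Fin m, (1 + c * b (Fin.castLE hm i))
      = ∏ i : Fin m, (1 + c * b' i.val) :=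
        Finset.prod_congr rfl (fun i _ => by rw [hb'eq m hm i])
    _ ≤ ∏ i : Fin m, (1 + c * a' i.val) := key
    _ = ∏ i : Fin m, (1 + c * a (Fin.castLE hm i)) :=
        Finset.prod_congr rfl (fun i _ => by rw [ha'eq m hm i])
end

section
/- Let H be an m×k complex matrix and let λ_1 ≥ λ_2 ≥ ... ≥ λ_k ≥ 0 be the eigenvalues of the Hermitian positive semidefinite matrix HᴴH, listed in nonincreasing order. Let F be a k×N complex matrix with orthonormal columns (FᴴF = I_N), where N ≤ k, and let c ≥ 0. Then det(I_N + c·FᴴHᴴHF) ≤ ∏_{i=1}^{N} (1 + c·λ_i), where the determinant is a (real, positive) value since I_N + c·FᴴHᴴHF is Hermitian positive definite. -/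
open Matrix
open scoped ComplexOrder

namespace SemiUnitaryPrecoderAux

open Finset Equiv Function

variable {N k : ℕ}

lemma le_apply_of_strictMono {f : Fin N → Fin k} (hf : StrictMono f) (i : Fin N) :
    (i : ℕ) ≤ (f i : ℕ) := by
  obtain ⟨v, hv⟩ := i
  induction v with
  | zero => exact Nat.zero_le _
  | succ w ih =>
      have hw : w < N := Nat.lt_of_succ_lt hv
      have h1 : f ⟨w, hw⟩ < f ⟨w + 1, hv⟩ := hf (by simp [Fin.lt_def])
      have h2 := ih hw
      simp only [Fin.lt_def, Fin.val_mk] at h1 h2 ⊢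
      omega

/-- Expansion of the determinant of a product of rectangular matrices over all maps. -/
lemma det_mul_expand (A : Matrix (Fin N) (Fin k) ℂ) (B : Matrix (Fin k) (Fin N) ℂ) :
    (A * B).det = ∑ g : Fin N → Fin k, (∏ i, A i (g i)) * (B.submatrix g id).det := by
  have h1 : (A * B) = Matrix.of (fun i => ∑ l : Fin k, A i l • B l) := by
    ext i j
    simp [Matrix.mul_apply, Finset.sum_apply]
  rw [h1]
  have h2 := (Matrix.detRowAlternating (n := Fin N) (R := ℂ)).toMultilinearMap.map_sum
      (g := fun (i : Fin N) (l : Fin k) => A i l • B l)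
  have h3 : ∀ g : Fin N → Fin k,
      (Matrix.detRowAlternating (n := Fin N) (R := ℂ)) (fun i => A i (g i) • B (g i))
        = (∏ i, A i (g i)) * (B.submatrix g id).det := by
    intro g
    have h4 := (Matrix.detRowAlternating (n := Fin N) (R := ℂ)).toMultilinearMap.map_smul_univ
        (fun i => A i (g i)) (fun i => B (g i))
    show (Matrix.detRowAlternating (n := Fin N) (R := ℂ)).toMultilinearMap
        (fun i => A i (g i) • B (g i)) = _
    rw [h4]
    rw [smul_eq_mul]
    rfl
  calc (Matrix.of (fun i => ∑ l : Fin k, A i l • B l)).det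
      = (Matrix.detRowAlternating (n := Fin N) (R := ℂ))
          (fun i => ∑ l : Fin k, A i l • B l) := rfl
    _ = ∑ g : Fin N → Fin k,
          (Matrix.detRowAlternating (n := Fin N) (R := ℂ)) (fun i => A i (g i) • B (g i)) := h2
    _ = ∑ g : Fin N → Fin k, (∏ i, A i (g i)) * (B.submatrix g id).det := by
        exact Finset.sum_congr rfl fun g _ => h3 g


/-- Cauchy–Binet style identity for a diagonal compression. -/
lemma det_conj_diagonal (G : Matrix (Fin k) (Fin N) ℂ) (d : Fin k → ℝ) :
    (Gᴴ * Matrix.diagonal (fun i => (d i : ℂ)) * G).det =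
      ((∑ s : {s : Finset (Fin k) // s.card = N},
        (∏ i : Fin N, d (s.1.orderEmbOfFin s.2 i)) *
          Complex.normSq ((G.submatrix (s.1.orderEmbOfFin s.2) id).det) : ℝ) : ℂ) := by
  classical
  set D : Matrix (Fin k) (Fin k) ℂ := Matrix.diagonal (fun i => (d i : ℂ)) with hD
  -- step 1 : expand over all maps
  have h1 : (Gᴴ * D * G).det
      = ∑ g : Fin N → Fin k,
          (∏ i, (starRingEnd ℂ) (G (g i) i) * (d (g i) : ℂ)) * (G.submatrix g id).det := by
    rw [det_mul_expand (Gᴴ * D) G]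
    refine Finset.sum_congr rfl fun g _ => ?_
    congr 1
    refine Finset.prod_congr rfl fun i _ => ?_
    rw [hD, Matrix.mul_diagonal, Matrix.conjTranspose_apply]
    rfl
  set w : (Fin N → Fin k) → ℂ :=
    fun g => (∏ i, (starRingEnd ℂ) (G (g i) i) * (d (g i) : ℂ)) * (G.submatrix g id).det
    with hw
  -- step 2 : non-injective terms vanish
  have h2 : ∀ g : Fin N → Fin k, ¬ Function.Injective g → w g = 0 := by
    intro g hg
    have : (G.submatrix g id).det = 0 := by
      rw [Function.not_injective_iff] at hg
      obtain ⟨a, b, hab, hne⟩ := hg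
      refine Matrix.det_zero_of_row_eq hne ?_
      funext j
      simp [Matrix.submatrix_apply, hab]
    simp [hw, this]
  -- step 3 : the bijection between (subset, permutation) pairs and injective maps
  let Ψ : {s : Finset (Fin k) // s.card = N} × Equiv.Perm (Fin N)
      → {g : Fin N → Fin k // Function.Injective g} :=
    fun p => ⟨fun b => p.1.1.orderEmbOfFin p.1.2 (p.2 b),
      fun a b hab => p.2.injective ((p.1.1.orderEmbOfFin p.1.2).injective hab)⟩
  have himg : ∀ (s : Finset (Fin k)) (hs : s.card = N) (σ : Equiv.Perm (Fin N)),
      Finset.univ.image (fun b => s.orderEmbOfFin hs (σ b)) = s := by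
    intro s hs σ
    ext a
    simp only [Finset.mem_image, Finset.mem_univ, true_and]
    constructor
    · rintro ⟨b, rfl⟩; exact Finset.orderEmbOfFin_mem s hs (σ b)
    · intro ha
      have : a ∈ Set.range (s.orderEmbOfFin hs) := by
        rw [Finset.range_orderEmbOfFin]; exact ha
      obtain ⟨b, hb⟩ := this
      exact ⟨σ.symm b, by simp [hb]⟩
  have hΨ : Function.Bijective Ψ := by
    constructor
    · rintro ⟨⟨s, hs⟩, σ⟩ ⟨⟨t, ht⟩, τ⟩ hpq
      have hfun : (fun b => s.orderEmbOfFin hs (σ b)) = fun b => t.orderEmbOfFin ht (τ b) :=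
        congrArg Subtype.val hpq
      have hst : s = t := by
        rw [← himg s hs σ, ← himg t ht τ, hfun]
      subst hst
      have hσ : σ = τ :=
        Equiv.ext fun b => (s.orderEmbOfFin hs).injective (congrFun hfun b)
      simp [hσ]
    · rintro ⟨g, hg⟩
      set s : Finset (Fin k) := Finset.univ.image g with hsdef
      have hs : s.card = N := by
        rw [hsdef, Finset.card_image_of_injective _ hg, Finset.card_univ, Fintype.card_fin]
      have hmem : ∀ b, g b ∈ s := fun b => Finset.mem_image_of_mem g (Finset.mem_univ b)
      set σfun : Fin N → Fin N := fun b => (s.orderIsoOfFin hs).symm ⟨g b, hmem b⟩ with hσf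
      have hinj : Function.Injective σfun := by
        intro a b hab
        have h5 : (((s.orderIsoOfFin hs) (σfun a) : Fin k)) =
            (((s.orderIsoOfFin hs) (σfun b) : Fin k)) := by rw [hab]
        simp only [hσf, OrderIso.apply_symm_apply] at h5
        exact hg h5
      refine ⟨(⟨s, hs⟩, Equiv.ofBijective σfun (Finite.injective_iff_bijective.mp hinj)), ?_⟩
      apply Subtype.ext
      funext b
      show s.orderEmbOfFin hs (σfun b) = g b
      rw [← Finset.coe_orderIsoOfFin_apply, hσf, OrderIso.apply_symm_apply]
  -- step 4 : group the sum
  have h4 : (Gᴴ * D * G).det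
      = ∑ p : {s : Finset (Fin k) // s.card = N} × Equiv.Perm (Fin N), w (Ψ p).1 := by
    rw [h1]
    rw [← Finset.sum_filter_of_ne (p := fun g : Fin N → Fin k => Function.Injective g)
      (fun g _ hne => by by_contra hgi; exact hne (h2 g hgi))]
    rw [← Finset.sum_subtype_eq_sum_filter w, Finset.subtype_univ]
    exact (Fintype.sum_bijective Ψ hΨ _ _ fun p => rfl).symm
  rw [h4, Fintype.sum_prod_type]
  rw [Complex.ofReal_sum]
  refine Finset.sum_congr rfl fun s _ => ?_
  -- step 5 : compute the inner sum over permutations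
  set f : Fin N → Fin k := fun i => s.1.orderEmbOfFin s.2 i with hf
  set M : Matrix (Fin N) (Fin N) ℂ := G.submatrix f id with hM
  have hsub : ∀ σ : Equiv.Perm (Fin N),
      G.submatrix (fun b => f (σ b)) id = M.submatrix σ id := by
    intro σ; rfl
  have hconj : ∑ σ : Equiv.Perm (Fin N),
      ((Equiv.Perm.sign σ : ℤ) : ℂ) * ∏ i, (starRingEnd ℂ) (M (σ i) i)
      = (starRingEnd ℂ) M.det := by
    have hY : ((Mᴴ)ᵀ).det
        = ∑ σ : Equiv.Perm (Fin N), ((Equiv.Perm.sign σ : ℤ) : ℂ) * ∏ i, ((Mᴴ)ᵀ) (σ i) i :=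
      Matrix.det_apply' _
    have hYe : ∀ (σ : Equiv.Perm (Fin N)) (i : Fin N),
        ((Mᴴ)ᵀ) (σ i) i = (starRingEnd ℂ) (M (σ i) i) := by
      intro σ i; rfl
    simp only [hYe] at hY
    rw [Matrix.det_transpose, Matrix.det_conjTranspose] at hY
    exact hY.symm
  calc ∑ σ : Equiv.Perm (Fin N), w (Ψ (s, σ)).1
      = ∑ σ : Equiv.Perm (Fin N),
          (∏ i, (starRingEnd ℂ) (G (f (σ i)) i) * (d (f (σ i)) : ℂ)) *
            ((M.submatrix σ id).det) := by
        refine Finset.sum_congr rfl fun σ _ => ?_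
        rw [hw]
        congr 1
    _ = ∑ σ : Equiv.Perm (Fin N),
          ((∏ i, (d (f i) : ℂ)) * M.det) *
            (((Equiv.Perm.sign σ : ℤ) : ℂ) * ∏ i, (starRingEnd ℂ) (M (σ i) i)) := by
        refine Finset.sum_congr rfl fun σ _ => ?_
        rw [Finset.prod_mul_distrib, Matrix.det_permute]
        have hdp : ∏ i, (d (f (σ i)) : ℂ) = ∏ i, (d (f i) : ℂ) :=
          Equiv.prod_comp σ (fun i => (d (f i) : ℂ))
        have hGM : ∀ (σ : Equiv.Perm (Fin N)) (i : Fin N),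
            G (f (σ i)) i = M (σ i) i := fun σ i => rfl
        simp only [hdp, hGM]
        push_cast
        ring
    _ = ((∏ i, (d (f i) : ℂ)) * M.det) * (starRingEnd ℂ) M.det := by
        rw [← Finset.mul_sum, hconj]
    _ = (((∏ i, d (f i)) * Complex.normSq M.det : ℝ) : ℂ) := by
        rw [mul_assoc, Complex.mul_conj]
        norm_cast

end SemiUnitaryPrecoderAux

/-- **Upper bound on the mutual information of a semi-unitary precoder (Sections III, V).**
Let `H` be an `m × k` complex matrix and `lam` the eigenvalues of `Hᴴ H` listed in
nonincreasing order (nonnegative, equal to the eigenvalues up to a permutation).  For every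
`k × N` matrix `F` with orthonormal columns (`N ≤ k`) and every `c ≥ 0`,
`det (I_N + c • Fᴴ Hᴴ H F) ≤ ∏_{i<N} (1 + c * lam i)`. -/
theorem det_semi_unitary_compression_le_top_eigenvalues
    {m k N : ℕ} (hN : N ≤ k)
    (H : Matrix (Fin m) (Fin k) ℂ)
    (lam : Fin k → ℝ)
    (hlam_mono : Antitone lam)
    (hlam_nonneg : ∀ i, 0 ≤ lam i)
    (hlam : ∃ e : Equiv.Perm (Fin k), ∀ i,
      lam i = (Matrix.isHermitian_conjTranspose_mul_self H).eigenvalues (e i))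
    (F : Matrix (Fin k) (Fin N) ℂ)
    (hF : Fᴴ * F = 1)
    (c : ℝ) (hc : 0 ≤ c) :
    ((1 : Matrix (Fin N) (Fin N) ℂ) + (c : ℂ) • (Fᴴ * (Hᴴ * H) * F)).det ≤
      ((∏ i : Fin N, (1 + c * lam (Fin.castLE hN i)) : ℝ) : ℂ) := by
  classical
  obtain ⟨e, he⟩ := hlam
  set hA := Matrix.isHermitian_conjTranspose_mul_self H with hAdef
  set U : Matrix (Fin k) (Fin k) ℂ :=
    (Matrix.IsHermitian.eigenvectorUnitary hA : Matrix (Fin k) (Fin k) ℂ) with hUdef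
  have hU1 : U * star U = 1 :=
    Matrix.mem_unitaryGroup_iff.mp (Matrix.IsHermitian.eigenvectorUnitary hA).2
  set W : Matrix (Fin k) (Fin k) ℂ := U.submatrix id ⇑e with hWdef
  have hWH : Wᴴ = (star U).submatrix ⇑e id := by
    rw [hWdef, Matrix.conjTranspose_submatrix, Matrix.star_eq_conjTranspose]
  have hWW : W * Wᴴ = 1 := by
    rw [hWdef, hWH, Matrix.submatrix_mul_equiv U (star U) id e id,
      Matrix.submatrix_id_id, hU1]
  have hdiag : Matrix.diagonal (fun i => (lam i : ℂ))
      = (Matrix.diagonal (RCLike.ofReal ∘ hA.eigenvalues)).submatrix ⇑e ⇑e := by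
    rw [Matrix.submatrix_diagonal_equiv]
    have hfun : (RCLike.ofReal ∘ hA.eigenvalues) ∘ ⇑e = fun i => ((lam i : ℝ) : ℂ) := by
      funext i
      rw [Function.comp_apply, Function.comp_apply, he i]
      rfl
    rw [hfun]
  have hspec : Hᴴ * H = W * Matrix.diagonal (fun i => (lam i : ℂ)) * Wᴴ := by
    rw [hdiag, hWdef, hWH,
      Matrix.submatrix_mul_equiv U (Matrix.diagonal (RCLike.ofReal ∘ hA.eigenvalues)) id e ⇑e,
      Matrix.submatrix_mul_equiv _ (star U) id e id,
      Matrix.submatrix_id_id]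
    exact hA.spectral_theorem
  set G : Matrix (Fin k) (Fin N) ℂ := Wᴴ * F with hGdef
  have hGH : Gᴴ = Fᴴ * W := by
    rw [hGdef, Matrix.conjTranspose_mul, Matrix.conjTranspose_conjTranspose]
  have hGG : Gᴴ * G = 1 := by
    rw [hGH, hGdef, Matrix.mul_assoc Fᴴ W (Wᴴ * F), ← Matrix.mul_assoc W Wᴴ F, hWW,
      Matrix.one_mul, hF]
  set d : Fin k → ℝ := fun i => 1 + c * lam i with hddef
  have hd2 : Matrix.diagonal (fun i => (d i : ℂ))
      = 1 + (c : ℂ) • Matrix.diagonal (fun i => (lam i : ℂ)) := by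
    rw [← Matrix.diagonal_one, ← Matrix.diagonal_smul, Matrix.diagonal_add]
    funext i
    rw [hddef]
    simp only [Pi.smul_apply, smul_eq_mul]
    push_cast
    ring
  have hmat : Gᴴ * Matrix.diagonal (fun i => (d i : ℂ)) * G
      = (1 : Matrix (Fin N) (Fin N) ℂ) + (c : ℂ) • (Fᴴ * (Hᴴ * H) * F) := by
    have h1' : (Fᴴ * W) * (Wᴴ * F) = 1 := by
      rw [Matrix.mul_assoc Fᴴ W (Wᴴ * F), ← Matrix.mul_assoc W Wᴴ F, hWW,
        Matrix.one_mul, hF]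
    have h2' : (Fᴴ * W) * ((c : ℂ) • Matrix.diagonal (fun i => (lam i : ℂ))) * (Wᴴ * F)
        = (c : ℂ) • (Fᴴ * (Hᴴ * H) * F) := by
      rw [Matrix.mul_smul, Matrix.smul_mul, hspec]
      congr 1
      simp only [Matrix.mul_assoc]
    rw [hGH, hGdef, hd2, Matrix.mul_add, Matrix.mul_one, Matrix.add_mul, h1', h2']
  rw [← hmat, SemiUnitaryPrecoderAux.det_conj_diagonal G d]
  have hsum1 : ∑ s : {s : Finset (Fin k) // s.card = N},
      Complex.normSq ((G.submatrix (s.1.orderEmbOfFin s.2) id).det) = 1 := by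
    have h := SemiUnitaryPrecoderAux.det_conj_diagonal G (fun _ => (1 : ℝ))
    have hone : Matrix.diagonal (fun _ : Fin k => ((1 : ℝ) : ℂ)) = 1 := by
      simp
    rw [hone, Matrix.mul_one, hGG, Matrix.det_one] at h
    have h' := h.symm
    rw [Complex.ofReal_eq_one] at h'
    simpa using h'
  rw [Complex.real_le_real]
  have hdmax : ∀ s : {s : Finset (Fin k) // s.card = N},
      (∏ i : Fin N, d (s.1.orderEmbOfFin s.2 i))
        ≤ ∏ i : Fin N, (1 + c * lam (Fin.castLE hN i)) := by
    intro s
    apply Finset.prod_le_prod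
    · intro i _
      rw [hddef]
      exact add_nonneg zero_le_one (mul_nonneg hc (hlam_nonneg _))
    · intro i _
      have hle : (Fin.castLE hN i) ≤ s.1.orderEmbOfFin s.2 i := by
        rw [Fin.le_def, Fin.coe_castLE]
        exact SemiUnitaryPrecoderAux.le_apply_of_strictMono
          (s.1.orderEmbOfFin s.2).strictMono i
      rw [hddef]
      exact add_le_add_right (mul_le_mul_of_nonneg_left (hlam_mono hle) hc) 1
  calc ∑ s : {s : Finset (Fin k) // s.card = N},
        (∏ i : Fin N, d (s.1.orderEmbOfFin s.2 i)) *
          Complex.normSq ((G.submatrix (s.1.orderEmbOfFin s.2) id).det)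
      ≤ ∑ s : {s : Finset (Fin k) // s.card = N},
          (∏ i : Fin N, (1 + c * lam (Fin.castLE hN i))) *
            Complex.normSq ((G.submatrix (s.1.orderEmbOfFin s.2) id).det) :=
        Finset.sum_le_sum fun s _ =>
          mul_le_mul_of_nonneg_right (hdmax s) (Complex.normSq_nonneg _)
    _ = (∏ i : Fin N, (1 + c * lam (Fin.castLE hN i))) *
          ∑ s : {s : Finset (Fin k) // s.card = N},
            Complex.normSq ((G.submatrix (s.1.orderEmbOfFin s.2) id).det) := by
        rw [← Finset.mul_sum]
    _ = ∏ i : Fin N, (1 + c * lam (Fin.castLE hN i)) := by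
        rw [hsum1, mul_one]
end
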